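/- Let k* = Q(√d) be a real quadratic field (d a positive nonsquare integer) with nontrivial automorphism σ. Let w ∈ k* with w ∉ Q, suppose w·σ(w) = a³ for some a ∈ Q, and suppose w is not a cube in k*. Set t = w + σ(w). Then: (1) the polynomial X³ − 3aX − t ∈ Q[X] is irreducible over Q; (2) in any field extension L of k* containing elements u, v with u³ = w, v³ = σ(w) and uv = a, the element u + v is a root of X³ − 3aX − t. -/
import Mathlib

open Polynomial

/-- Every element of a quadratic field generated by `r` is `p + q·r`. -/
lemma quad_repr (F : Type*) [Field F] [CharZero F] (d : ℤ) (r : F)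
    (hr : r ^ 2 = (d : F)) (hgen : Algebra.adjoin ℚ {r} = ⊤) (y : F) :
    ∃ p q : ℚ, y = algebraMap ℚ F p + algebraMap ℚ F q * r := by
  have hy : y ∈ Algebra.adjoin ℚ {r} := hgen ▸ Algebra.mem_top
  induction hy using Algebra.adjoin_induction with
  | mem x hx =>
    rcases hx with rfl
    exact ⟨0, 1, by simp⟩
  | algebraMap p => exact ⟨p, 0, by simp⟩
  | add x y _ _ hx hy =>
    obtain ⟨p1, q1, rfl⟩ := hx
    obtain ⟨p2, q2, rfl⟩ := hy
    exact ⟨p1 + p2, q1 + q2, by simp only [eq_ratCast]; push_cast; ring⟩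
  | mul x y _ _ hx hy =>
    obtain ⟨p1, q1, rfl⟩ := hx
    obtain ⟨p2, q2, rfl⟩ := hy
    refine ⟨p1 * p2 + q1 * q2 * d, p1 * q2 + p2 * q1, ?_⟩
    simp only [eq_ratCast]
    push_cast
    linear_combination (q1 : F) * q2 * hr

/-- **Proposition `Q`** (§1.5, algebraic content).  Let `k* = ℚ(√d)` be a real quadratic field
(`d` a positive nonsquare integer) with nontrivial automorphism `σ`.  Let `w ∈ k*` with
`w ∉ ℚ`, suppose `w·σ(w) = a³` for some `a ∈ ℚ`, and suppose `w` is not a cube in `k*`.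
Set `t = w + σ(w)` (a rational number).  Then:
(1) the polynomial `X³ − 3aX − t ∈ ℚ[X]` is irreducible over `ℚ`;
(2) in any field extension `L` of `k*` containing elements `u, v` with `u³ = w`, `v³ = σ(w)`
and `uv = a`, the element `u + v` is a root of `X³ − 3aX − t`. -/
theorem cubic_polynomial_of_kummer_radical
    (F : Type*) [Field F] [CharZero F]
    -- `F = ℚ(√d)` is a real quadratic field:
    (d : ℤ) (hd : 0 < d) (hds : ¬ IsSquare d)
    (r : F) (hr : r ^ 2 = (d : F)) (hgen : Algebra.adjoin ℚ {r} = ⊤)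
    -- `σ` is the nontrivial automorphism of `F`:
    (σ : F ≃ₐ[ℚ] F) (hσ : σ r = -r)
    -- `w ∈ F`, `w ∉ ℚ`:
    (w : F) (hw : w ∉ (algebraMap ℚ F).range)
    -- `w · σ(w) = a³` with `a ∈ ℚ`:
    (a : ℚ) (ha : w * σ w = algebraMap ℚ F (a ^ 3))
    -- `w` is not a cube in `F`:
    (hwc : ¬ ∃ z : F, z ^ 3 = w)
    -- `t = w + σ(w)`:
    (t : ℚ) (ht : algebraMap ℚ F t = w + σ w) :
    Irreducible (X ^ 3 - C (3 * a) * X - C t : ℚ[X]) ∧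
    ∀ (L : Type*) [Field L] [Algebra F L], ∀ u v : L,
      u ^ 3 = algebraMap F L w → v ^ 3 = algebraMap F L (σ w) →
      u * v = algebraMap F L (algebraMap ℚ F a) →
      (u + v) ^ 3 - 3 * algebraMap F L (algebraMap ℚ F a) * (u + v)
        - algebraMap F L (algebraMap ℚ F t) = 0 := by
  have hr0 : r ≠ 0 := by
    intro h
    rw [h, zero_pow (by norm_num)] at hr
    have hd0 : (d : ℤ) ≠ 0 := by omega
    exact hd0 (by exact_mod_cast hr.symm)
  have haC : w * σ w = ((a : F)) ^ 3 := by
    rw [ha, eq_ratCast]; push_cast; ring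
  have htC : ((t : F)) = w + σ w := by rw [← ht, eq_ratCast]
  -- elements fixed by σ are rational
  have fixed : ∀ y : F, σ y = y → y ∈ (algebraMap ℚ F).range := by
    intro y hy
    obtain ⟨p, q, rfl⟩ := quad_repr F d r hr hgen y
    have h1 : algebraMap ℚ F p - algebraMap ℚ F q * r
        = algebraMap ℚ F p + algebraMap ℚ F q * r := by
      simpa [map_add, map_mul, hσ, AlgEquiv.commutes, sub_eq_add_neg] using hy
    have h2 : (2 : F) * (algebraMap ℚ F q * r) = 0 := by linear_combination -h1
    have h3 : algebraMap ℚ F q * r = 0 := by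
      rcases mul_eq_zero.mp h2 with h | h
      · norm_num at h
      · exact h
    have hq : q = 0 := by
      rcases mul_eq_zero.mp h3 with h | h
      · exact (map_eq_zero_iff _ (algebraMap ℚ F).injective).mp h
      · exact absurd h hr0
    exact ⟨p, by simp [hq]⟩
  -- no rational root
  have key : ∀ x : ℚ, x ^ 3 - 3 * a * x - t ≠ 0 := by
    intro x hx
    have hx' : t = x ^ 3 - 3 * a * x := by linarith
    obtain ⟨s, hs2, h2w, hsw⟩ : ∃ s : F, s ^ 2 = ((t : F)) ^ 2 - 4 * ((a : F)) ^ 3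
        ∧ ((t : F)) + s = 2 * w ∧ (s = 0 → σ w = w) := by
      refine ⟨w - σ w, ?_, by linear_combination htC, fun h => (sub_eq_zero.mp h).symm⟩
      linear_combination (-(((t : F)) + w + σ w)) * htC - 4 * haC
    by_cases hxa : x ^ 2 = a
    · -- then w = σ w, so w is rational: contradiction
      have hts : t ^ 2 - 4 * a ^ 3 = 0 := by rw [hx', ← hxa]; ring
      have hs0 : s = 0 := by
        have h0 : s ^ 2 = 0 := by
          have h' : ((t ^ 2 - 4 * a ^ 3 : ℚ) : F) = 0 := by rw [hts]; norm_num
          push_cast at h'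
          rw [hs2]
          linear_combination h'
        exact pow_eq_zero_iff (by norm_num) |>.mp h0
      exact hw (fixed w (hsw hs0))
    · -- construct a cube root of w in F
      have hne : x ^ 2 - a ≠ 0 := sub_ne_zero.mpr hxa
      have hneF : ((x : F)) ^ 2 - ((a : F)) ≠ 0 := by
        intro h
        apply hne
        have : ((x ^ 2 - a : ℚ) : F) = 0 := by push_cast; linear_combination h
        exact_mod_cast this
      have hid : t ^ 2 - 4 * a ^ 3 = (x ^ 2 - 4 * a) * (x ^ 2 - a) ^ 2 := by
        rw [hx']; ring
      have hidF : ((t : F)) ^ 2 - 4 * ((a : F)) ^ 3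
          = (((x : F)) ^ 2 - 4 * (a : F)) * (((x : F)) ^ 2 - (a : F)) ^ 2 := by
        exact_mod_cast congrArg (fun y : ℚ => (y : F)) hid
      obtain ⟨ρ, hρ2, hρs⟩ : ∃ ρ : F, ρ ^ 2 = ((x : F)) ^ 2 - 4 * ((a : F))
          ∧ (((x : F)) ^ 2 - ((a : F))) * ρ = s := by
        refine ⟨s * (((x : F)) ^ 2 - ((a : F)))⁻¹, ?_, ?_⟩
        · rw [mul_pow, hs2, hidF]
          field_simp
        · field_simp
      have hXtF : ((x : F)) ^ 3 - 3 * ((a : F)) * ((x : F)) - ((t : F)) = 0 := by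
        exact_mod_cast congrArg (fun y : ℚ => (y : F)) hx
      apply hwc
      refine ⟨(((x : F)) + ρ) / 2, ?_⟩
      have h8 : (((x : F)) + ρ) ^ 3 = 8 * w := by
        linear_combination (3 * ((x : F)) + ρ) * hρ2 + 4 * hρs + 4 * hXtF + 4 * h2w
      field_simp
      linear_combination h8
  constructor
  · -- irreducibility
    have hdeg : (X ^ 3 - C (3 * a) * X - C t : ℚ[X]).natDegree = 3 := by
      compute_degree!
    rw [irreducible_iff_roots_eq_zero_of_degree_le_three (by omega) (by omega)]
    rw [Multiset.eq_zero_iff_forall_notMem]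
    intro x hx
    have hne : (X ^ 3 - C (3 * a) * X - C t : ℚ[X]) ≠ 0 := by
      intro h
      rw [h] at hdeg
      simp at hdeg
    rw [mem_roots hne] at hx
    have heval := hx
    unfold IsRoot at heval
    simp only [eval_sub, eval_mul, eval_pow, eval_X, eval_C] at heval
    exact key x (by linarith)
  · intro L _ _ u v hu hv huv
    have hd' : algebraMap F L (algebraMap ℚ F t) = u ^ 3 + v ^ 3 := by
      rw [ht, map_add, hu, hv]
    linear_combination 3 * (u + v) * huv - hd'
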